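/- arXiv:2303.08925 — 3 statements merged into one kernel-verified Lean document; each statement's English description precedes it below -/
import Mathlib

section
/- Fix n ≥ 2. A permutation σ of {1,…,n} satisfies the condition 'for every k ∈ {1,…,n−1}, if σ⁻¹(k) < σ⁻¹(k+1) then σ⁻¹(k+1) = σ⁻¹(k) + 1' if and only if σ = w_{d_1,…,d_r} for some composition (d_1,…,d_r) of n. -/
/-- Partial sums `D_a = d_1 + ⋯ + d_a` of a composition (0-indexed: `psum d a = ∑_{b < a} d b`). -/
def psum (d : ℕ → ℕ) (a : ℕ) : ℕ := ∑ b ∈ Finset.range a, d b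

/-- `σ` is the block anti-diagonal permutation `w_{d_1,…,d_r}` (in 0-indexed coordinates):
for `0 ≤ a < r` and `0 ≤ k < d a`, the point `D_a + k` is sent to `n - D_{a+1} + k`. -/
def IsBlockPerm (n r : ℕ) (d : ℕ → ℕ) (σ : Equiv.Perm (Fin n)) : Prop :=
  ∀ a k : ℕ, a < r → k < d a → ∀ h : psum d a + k < n,
    ((σ ⟨psum d a + k, h⟩ : Fin n) : ℕ) = n - psum d (a + 1) + k

/-!
Read on positions, the condition says that whenever the value `v + 1` lies to the right of `v`,
it lies immediately to its right. In a block permutation, positions in different blocks carry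
decreasing values, so the condition holds. Conversely, call `P` a block boundary when `σ` maps
`[P, n)` onto `[0, n - P)`, as `0` does. Past a boundary `P`, the values `σ P, σ P + 1, …,
n - P - 1` all sit in `[P, n)`, so the condition places them at consecutive positions; hence
`P + (n - P - σ P)` is the next boundary, and iterating from `0` until reaching `n` yields
the composition.
-/

@[simp] lemma psum_zero (d : ℕ → ℕ) : psum d 0 = 0 := rfl

lemma psum_succ (d : ℕ → ℕ) (a : ℕ) : psum d (a + 1) = psum d a + d a :=
  Finset.sum_range_succ d a

lemma psum_monotone (d : ℕ → ℕ) : Monotone (psum d) := fun _ _ h =>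
  Finset.sum_le_sum_of_subset (Finset.range_subset_range.2 h)

lemma exists_psum_le_lt (d : ℕ → ℕ) {r p : ℕ} (hp : p < psum d r) :
    ∃ a < r, psum d a ≤ p ∧ p < psum d (a + 1) := by
  have hex : ∃ a, p < psum d a := ⟨r, hp⟩
  obtain ⟨a, ha⟩ : ∃ a, Nat.find hex = a + 1 :=
    Nat.exists_eq_succ_of_ne_zero fun h => by simpa [h] using Nat.find_spec hex
  refine ⟨a, ?_, not_lt.1 (Nat.find_min hex (by omega)), ha ▸ Nat.find_spec hex⟩
  have := Nat.find_min' hex hp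
  omega

section BlockFunctions

variable {n r : ℕ} {d g : ℕ → ℕ}

def SuccAdjacent (n : ℕ) (g : ℕ → ℕ) : Prop :=
  ∀ i j, i < j → j < n → g j = g i + 1 → j = i + 1

def IsBlockFun (n r : ℕ) (d g : ℕ → ℕ) : Prop :=
  ∀ a < r, ∀ k < d a, g (psum d a + k) = n - psum d (a + 1) + k

lemma IsBlockFun.exists_block (hg : IsBlockFun n r d g) (hsum : psum d r = n) {p : ℕ}
    (hp : p < n) : ∃ a < r, psum d a ≤ p ∧ p < psum d (a + 1) ∧
      g p = n - psum d (a + 1) + (p - psum d a) := by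
  obtain ⟨a, har, hap, hpa⟩ := exists_psum_le_lt d (hsum ▸ hp : p < psum d r)
  refine ⟨a, har, hap, hpa, ?_⟩
  have hk : p - psum d a < d a := by rw [psum_succ] at hpa; omega
  simpa [Nat.add_sub_cancel' hap] using hg a har _ hk

theorem IsBlockFun.succAdjacent (hg : IsBlockFun n r d g) (hsum : psum d r = n) :
    SuccAdjacent n g := by
  intro i j hij hjn hgij
  obtain ⟨a, har, hai, hia, hgi⟩ := hg.exists_block hsum (hij.trans hjn)
  obtain ⟨b, hbr, hbj, hjb, hgj⟩ := hg.exists_block hsum hjn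
  have hale : psum d (a + 1) ≤ n := hsum ▸ psum_monotone d har
  have hble : psum d (b + 1) ≤ n := hsum ▸ psum_monotone d hbr
  rcases lt_trichotomy a b with hab | rfl | hba
  · have := psum_monotone d (show a + 1 ≤ b by omega)
    omega
  · omega
  · have := psum_monotone d (show b + 1 ≤ a by omega)
    omega

def IsBlockBoundary (n : ℕ) (g : ℕ → ℕ) (P : ℕ) : Prop :=
  ∀ j < n, P ≤ j ↔ g j < n - P

lemma isBlockBoundary_zero (hg : Set.MapsTo g (Set.Iio n) (Set.Iio n)) :
    IsBlockBoundary n g 0 := fun j hj => by simpa using hg hj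

lemma IsBlockBoundary.apply_add (hsurj : Set.SurjOn g (Set.Iio n) (Set.Iio n))
    (hC : SuccAdjacent n g) {P : ℕ} (hP : IsBlockBoundary n g P) :
    ∀ k < n - P - g P, g (P + k) = g P + k := by
  intro k
  induction k using Nat.strong_induction_on with
  | _ k ih =>
    intro hk
    rcases k with _ | m
    · rfl
    have hgm : g (P + m) = g P + m := ih m (by omega) (by omega)
    obtain ⟨j, hj, hgj⟩ := hsurj (show g P + m + 1 ∈ Set.Iio n from by simp; omega)
    simp only [Set.mem_Iio] at hj
    have hPj : P ≤ j := (hP j hj).2 (by omega)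
    have hmj : P + m < j := by
      by_contra! hjm
      have := ih (j - P) (by omega) (by omega)
      rw [Nat.add_sub_cancel' hPj] at this
      omega
    have := hC (P + m) j hmj hj (by omega)
    rw [this] at hgj
    omega

lemma IsBlockBoundary.next (hinj : Set.InjOn g (Set.Iio n))
    (hsurj : Set.SurjOn g (Set.Iio n) (Set.Iio n)) (hC : SuccAdjacent n g) {P : ℕ}
    (hP : IsBlockBoundary n g P) : IsBlockBoundary n g (P + (n - P - g P)) := by
  intro j hj
  have hblock := hP.apply_add hsurj hC
  constructor
  · intro hQj
    have hgj : g j < n - P := (hP j hj).1 (by omega)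
    by_contra! hgj'
    have hk := hblock (g j - g P) (by omega)
    have := hinj (show j ∈ Set.Iio n from hj)
      (show P + (g j - g P) ∈ Set.Iio n from by simp; omega) (by omega)
    omega
  · intro hgj
    by_contra! hjQ
    have hPj : P ≤ j := (hP j hj).2 (by omega)
    have := hblock (j - P) (by omega)
    rw [Nat.add_sub_cancel' hPj] at this
    omega

def blockStart (n : ℕ) (g : ℕ → ℕ) : ℕ → ℕ
  | 0 => 0
  | a + 1 => blockStart n g a + (n - blockStart n g a - g (blockStart n g a))

def blockLength (n : ℕ) (g : ℕ → ℕ) (a : ℕ) : ℕ := n - blockStart n g a - g (blockStart n g a)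

lemma psum_blockLength (a : ℕ) : psum (blockLength n g) a = blockStart n g a := by
  induction a with
  | zero => rfl
  | succ a ih => rw [psum_succ, ih]; rfl

lemma blockStart_le (a : ℕ) : blockStart n g a ≤ n := by
  induction a with
  | zero => exact Nat.zero_le n
  | succ a ih => simp only [blockStart]; omega

variable (hbij : Set.BijOn g (Set.Iio n) (Set.Iio n)) (hC : SuccAdjacent n g)
include hbij hC

lemma isBlockBoundary_blockStart (a : ℕ) : IsBlockBoundary n g (blockStart n g a) := by
  induction a with
  | zero => exact isBlockBoundary_zero hbij.mapsTo
  | succ a ih => exact ih.next hbij.injOn hbij.surjOn hC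

lemma blockLength_pos {a : ℕ} (ha : blockStart n g a < n) : 0 < blockLength n g a := by
  have := (isBlockBoundary_blockStart hbij hC a _ ha).1 le_rfl
  unfold blockLength
  omega

lemma min_le_blockStart (a : ℕ) : min a n ≤ blockStart n g a := by
  induction a with
  | zero => simp
  | succ a ih =>
    have hstep : blockStart n g (a + 1) = blockStart n g a + blockLength n g a := rfl
    by_cases ha : blockStart n g a < n
    · have := blockLength_pos hbij hC ha
      omega
    · have := blockStart_le (n := n) (g := g) (a + 1)
      omega

theorem exists_isBlockFun (hn : 0 < n) :
    ∃ r d, 0 < r ∧ (∀ a < r, 0 < d a) ∧ psum d r = n ∧ IsBlockFun n r d g := by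
  have hex : ∃ r, blockStart n g r = n :=
    ⟨n, le_antisymm (blockStart_le n) (by simpa using min_le_blockStart hbij hC n)⟩
  have hlt : ∀ a < Nat.find hex, blockStart n g a < n := fun a ha =>
    lt_of_le_of_ne (blockStart_le a) (Nat.find_min hex ha)
  refine ⟨Nat.find hex, blockLength n g, ?_, fun a ha => blockLength_pos hbij hC (hlt a ha),
    by rw [psum_blockLength]; exact Nat.find_spec hex, ?_⟩
  · refine Nat.pos_of_ne_zero fun h => ?_
    simpa [h, blockStart, hn.ne] using Nat.find_spec hex
  · intro a ha k hk
    have hP := isBlockBoundary_blockStart hbij hC a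
    have hgP := (hP _ (hlt a ha)).1 le_rfl
    rw [psum_blockLength, psum_blockLength, hP.apply_add hbij.surjOn hC k hk]
    simp only [blockStart]
    omega

end BlockFunctions

section Permutations

variable {n : ℕ}

/-- `σ` read as a function on `ℕ`, with junk value `0` outside `[0, n)`. -/
def natFun (σ : Equiv.Perm (Fin n)) (j : ℕ) : ℕ := if h : j < n then σ ⟨j, h⟩ else 0

lemma natFun_of_lt (σ : Equiv.Perm (Fin n)) {j : ℕ} (hj : j < n) : natFun σ j = σ ⟨j, hj⟩ :=
  dif_pos hj

@[simp] lemma natFun_val (σ : Equiv.Perm (Fin n)) (i : Fin n) : natFun σ i = σ i :=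
  natFun_of_lt σ i.isLt

lemma bijOn_natFun (σ : Equiv.Perm (Fin n)) : Set.BijOn (natFun σ) (Set.Iio n) (Set.Iio n) := by
  refine ⟨fun j (hj : j < n) => ?_, fun i (hi : i < n) j (hj : j < n) hij => ?_,
    fun v (hv : v < n) => ⟨σ⁻¹ ⟨v, hv⟩, (σ⁻¹ ⟨v, hv⟩).isLt, by simp⟩⟩
  · simpa using natFun_val σ ⟨j, hj⟩ ▸ (σ ⟨j, hj⟩).isLt
  · have hσ : σ ⟨i, hi⟩ = σ ⟨j, hj⟩ := Fin.ext (by simpa [natFun, hi, hj] using hij)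
    simpa using σ.injective hσ

lemma succAdjacent_natFun_iff (σ : Equiv.Perm (Fin n)) :
    (∀ (k : ℕ) (hk : k + 1 < n),
        σ⁻¹ ⟨k, Nat.lt_of_succ_lt hk⟩ < σ⁻¹ ⟨k + 1, hk⟩ →
        ((σ⁻¹ ⟨k + 1, hk⟩ : Fin n) : ℕ) = ((σ⁻¹ ⟨k, Nat.lt_of_succ_lt hk⟩ : Fin n) : ℕ) + 1) ↔
      SuccAdjacent n (natFun σ) := by
  constructor
  · intro h i j hij hjn hgij
    have hin : i < n := hij.trans hjn
    have hk : (σ ⟨i, hin⟩ : ℕ) + 1 < n := by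
      rw [← natFun_of_lt σ hin, ← hgij, natFun_of_lt σ hjn]
      exact Fin.isLt _
    have hσi : σ⁻¹ ⟨σ ⟨i, hin⟩, Nat.lt_of_succ_lt hk⟩ = ⟨i, hin⟩ := by simp
    have hσj : σ⁻¹ ⟨σ ⟨i, hin⟩ + 1, hk⟩ = ⟨j, hjn⟩ := by
      rw [Equiv.Perm.inv_eq_iff_eq]
      ext
      simpa [natFun, hin, hjn] using hgij.symm
    simpa [hσi, hσj] using h _ hk (by rw [hσi, hσj]; exact hij)
  · intro h k hk hlt
    exact h _ _ hlt (σ⁻¹ ⟨k + 1, hk⟩).isLt (by simp)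

lemma isBlockPerm_iff_isBlockFun {r : ℕ} {d : ℕ → ℕ} (hsum : psum d r = n)
    (σ : Equiv.Perm (Fin n)) : IsBlockPerm n r d σ ↔ IsBlockFun n r d (natFun σ) := by
  refine ⟨fun h a ha k hk => ?_, fun h a k ha hk hn => natFun_of_lt σ hn ▸ h a ha k hk⟩
  have hn : psum d a + k < n := by
    have := psum_monotone d ha
    rw [psum_succ] at this
    omega
  exact natFun_of_lt σ hn ▸ h a k ha hk hn

end Permutations

/-- A permutation `σ` of `{1,…,n}` satisfies: for every `k ∈ {1,…,n-1}`,
if `σ⁻¹(k) < σ⁻¹(k+1)` then `σ⁻¹(k+1) = σ⁻¹(k) + 1`, if and only if `σ = w_{d_1,…,d_r}`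
for some composition `(d_1,…,d_r)` of `n`. (Indices are 0-indexed in this formalization.) -/
theorem stmt3 (n : ℕ) (hn : 2 ≤ n) (σ : Equiv.Perm (Fin n)) :
    (∀ (k : ℕ) (hk : k + 1 < n),
        σ⁻¹ ⟨k, Nat.lt_of_succ_lt hk⟩ < σ⁻¹ ⟨k + 1, hk⟩ →
        ((σ⁻¹ ⟨k + 1, hk⟩ : Fin n) : ℕ) = ((σ⁻¹ ⟨k, Nat.lt_of_succ_lt hk⟩ : Fin n) : ℕ) + 1) ↔
      ∃ (r : ℕ) (d : ℕ → ℕ), 0 < r ∧ (∀ a < r, 0 < d a) ∧ psum d r = n ∧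
        IsBlockPerm n r d σ := by
  rw [succAdjacent_natFun_iff]
  constructor
  · intro hC
    obtain ⟨r, d, hr, hd, hsum, hblock⟩ := exists_isBlockFun (bijOn_natFun σ) hC (by omega)
    exact ⟨r, d, hr, hd, hsum, (isBlockPerm_iff_isBlockFun hsum σ).2 hblock⟩
  · rintro ⟨r, d, -, -, hsum, hblock⟩
    exact ((isBlockPerm_iff_isBlockFun hsum σ).1 hblock).succAdjacent hsum
end

section
/- Fix n ≥ 2 and let (d_1,…,d_r) be a composition of n. For t ∈ {1,…,n−d_r} let a(t) be the unique index a with D_{a−1} < t ≤ D_a, and let V_t denote the word s_t s_{t+1} ⋯ s_{t+(n−D_{a(t)})−1} in the adjacent transpositions s_i = (i, i+1) of the symmetric group S_n. Then the concatenated word V_{n−d_r} V_{n−d_r−1} ⋯ V_1, with letters applied from left to right (i.e. the leftmost transposition is applied first), is a reduced expression for w_{d_1,…,d_r}: its product equals w_{d_1,…,d_r}, and its total number of letters, ∑_{t=1}^{n−d_r} (n − D_{a(t)}) = ∑_{1 ≤ a < b ≤ r} d_a d_b, equals the number of inversions of w_{d_1,…,d_r}. -/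
/-- The number of inversions of a permutation of `Fin n`. -/
def invCount {n : ℕ} (σ : Equiv.Perm (Fin n)) : ℕ :=
  (Finset.univ.filter fun p : Fin n × Fin n => p.1 < p.2 ∧ σ p.2 < σ p.1).card

/-- The adjacent transposition swapping the (0-indexed) points `i` and `i+1` of `Fin n`;
in 1-indexed notation this is `s_{i+1}`.  (Junk value `1` if `i+1 ≥ n`.) -/
def adjSwap (n i : ℕ) : Equiv.Perm (Fin n) :=
  if h : i + 1 < n then Equiv.swap ⟨i, Nat.lt_of_succ_lt h⟩ ⟨i + 1, h⟩ else 1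

/-- The row word `V_t = s_t s_{t+1} ⋯ s_{t+(n-D_{a(t)})-1}` (1-indexed letters `s_m`, i.e.
`adjSwap n (m-1)`), as a list with the leftmost letter first. -/
def rowWord (n : ℕ) (d : ℕ → ℕ) (aIdx : ℕ → ℕ) (t : ℕ) : List (Equiv.Perm (Fin n)) :=
  (List.range (n - psum d (aIdx t))).map fun m => adjSwap n (t - 1 + m)

/-- The concatenated word `V_{n-d_r} V_{n-d_r-1} ⋯ V_1`, leftmost letter first. -/
def fullWord (n r : ℕ) (d : ℕ → ℕ) (aIdx : ℕ → ℕ) : List (Equiv.Perm (Fin n)) :=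
  ((List.range (n - d (r - 1))).map fun u => rowWord n d aIdx (n - d (r - 1) - u)).flatten

/-!
Applied from the left, the row `V_t` is the cycle sending `t` to `t + ℓ` and shifting
`t + 1, …, t + ℓ` down by one, where `ℓ = n - D_{a(t)}` is the number of points in the blocks
after that of `t`. By downward induction on `j`, applying `V_{n-d_r}, …, V_{j+1}` fixes the
points `≤ j` and acts on the others as the block anti-diagonal permutation of the composition of
`n - j` obtained by deleting the first `j` points; for `j = 0` this is `w`.

The same numbers `ℓ` count inversions: `(x, y)` is an inversion of `w` exactly when `y` lies in
a later block than `x`. Grouping the points by blocks, the length of the word and the number of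
inversions both equal `∑_a d_a (n - D_{a+1}) = ∑_{a<b} d_a d_b`.
-/

namespace BlockAntiDiagonal

open Finset

section Blocks

variable {d : ℕ → ℕ} {r : ℕ}

lemma psum_succ (d : ℕ → ℕ) (a : ℕ) : psum d (a + 1) = psum d a + d a :=
  sum_range_succ d a

lemma psum_mono (d : ℕ → ℕ) : Monotone (psum d) := fun _ _ h =>
  sum_le_sum_of_subset (range_subset_range.mpr h)

lemma sum_Ioo_eq_psum_sub {a : ℕ} (ha : a < r) :
    ∑ b ∈ Ioo a r, d b = psum d r - psum d (a + 1) := by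
  rw [← Ico_add_one_left_eq_Ioo, psum, psum, range_eq_Ico, range_eq_Ico,
    ← sum_Ico_consecutive d (Nat.zero_le (a + 1)) ha, Nat.add_sub_cancel_left]

/-- The block of the `0`-indexed point `x`, itself `0`-indexed: the paper's `a(t)` is
`blockIdx d r (t - 1) + 1`. -/
def blockIdx (d : ℕ → ℕ) (r x : ℕ) : ℕ :=
  Nat.findGreatest (fun a => psum d a ≤ x) (r - 1)

lemma blockIdx_spec {x : ℕ} (hx : x < psum d r) :
    blockIdx d r x < r ∧ psum d (blockIdx d r x) ≤ x ∧ x < psum d (blockIdx d r x + 1) := by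
  have hr : r ≠ 0 := by rintro rfl; simp [psum] at hx
  have hle : blockIdx d r x ≤ r - 1 := Nat.findGreatest_le _
  have hspec : psum d (blockIdx d r x) ≤ x :=
    Nat.findGreatest_spec (P := fun a => psum d a ≤ x) (Nat.zero_le _) (by simp [psum])
  refine ⟨by omega, hspec, ?_⟩
  rcases hle.lt_or_eq with hlt | heq
  · exact not_le.mp
      (Nat.findGreatest_is_greatest (P := fun a => psum d a ≤ x) (Nat.lt_succ_self _) hlt)
  · rwa [heq, Nat.sub_add_cancel (Nat.pos_of_ne_zero hr)]

lemma blockIdx_eq {x b : ℕ} (hb : b < r) (h₁ : psum d b ≤ x) (h₂ : x < psum d (b + 1)) :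
    blockIdx d r x = b := by
  obtain ⟨-, hlo, hhi⟩ := blockIdx_spec (h₂.trans_le (psum_mono d hb))
  rcases lt_trichotomy (blockIdx d r x) b with h | h | h
  · have := psum_mono d (show blockIdx d r x + 1 ≤ b from h); omega
  · exact h
  · have := psum_mono d (show b + 1 ≤ blockIdx d r x from h); omega

lemma psum_trichotomy (d : ℕ → ℕ) (a b : ℕ) :
    (a < b ∧ psum d (a + 1) ≤ psum d b) ∨
      (psum d a = psum d b ∧ psum d (a + 1) = psum d (b + 1)) ∨
      (b < a ∧ psum d (b + 1) ≤ psum d a) := by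
  rcases lt_trichotomy a b with h | rfl | h
  · exact Or.inl ⟨h, psum_mono d h⟩
  · exact Or.inr (Or.inl ⟨rfl, rfl⟩)
  · exact Or.inr (Or.inr ⟨h, psum_mono d h⟩)

lemma sum_range_psum_blockIdx {M : Type*} [AddCommMonoid M] (f : ℕ → M) {m : ℕ}
    (hm : m ≤ r) :
    ∑ i ∈ range (psum d m), f (blockIdx d r i) = ∑ a ∈ range m, d a • f a := by
  induction m with
  | zero => simp [psum]
  | succ m ih =>
    have hblock : ∀ i ∈ Ico (psum d m) (psum d (m + 1)), f (blockIdx d r i) = f m := by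
      intro i hi
      rw [mem_Ico] at hi
      rw [blockIdx_eq (by omega) hi.1 hi.2]
    rw [range_eq_Ico, ← sum_Ico_consecutive _ (Nat.zero_le _) (psum_mono d m.le_succ),
      ← range_eq_Ico, ih (by omega), sum_congr rfl hblock, sum_const, Nat.card_Ico,
      psum_succ, Nat.add_sub_cancel_left, sum_range_succ]

end Blocks

section Cycles

def shiftCycle (s L y : ℕ) : ℕ :=
  if y = s then s + L else if s < y ∧ y ≤ s + L then y - 1 else y

lemma adjSwap_apply_val {n i : ℕ} (h : i + 1 < n) (x : Fin n) :
    (adjSwap n i x : ℕ) =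
      if (x : ℕ) = i then i + 1 else if (x : ℕ) = i + 1 then i else x := by
  rw [adjSwap, dif_pos h, Equiv.swap_apply_def]
  split_ifs <;> simp_all [Fin.ext_iff]

lemma prod_reverse_map_adjSwap_apply_val {n : ℕ} (s L : ℕ) (h : s + L < n) (x : Fin n) :
    (((List.range L).map fun m => adjSwap n (s + m)).reverse.prod x : ℕ) =
      shiftCycle s L x := by
  induction L with
  | zero =>
    simp only [shiftCycle, List.range_zero, List.map_nil, List.reverse_nil, List.prod_nil,
      Equiv.Perm.one_apply, Nat.add_zero]
    split_ifs <;> omega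
  | succ L ih =>
    rw [List.range_succ, List.map_append, List.reverse_append, List.map_singleton,
      List.reverse_singleton, List.singleton_append, List.prod_cons, Equiv.Perm.mul_apply,
      adjSwap_apply_val (by omega), ih (by omega)]
    simp only [shiftCycle]
    split_ifs <;> omega

end Cycles

section Rows

variable {n r : ℕ} {d : ℕ → ℕ}

/-- On the points `≥ j` this is the block anti-diagonal permutation of the composition of
`n - j` obtained from `d` by deleting the first `j` points; the points `< j` are fixed. -/
def partialImage (n r : ℕ) (d : ℕ → ℕ) (j x : ℕ) : ℕ :=
  if x < j then x
  else n + j - psum d (blockIdx d r x + 1) + (x - max (psum d (blockIdx d r x)) j)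

lemma psum_blockIdx_succ_le (hsum : psum d r = n) {x : ℕ} (hx : x < n) :
    psum d (blockIdx d r x + 1) ≤ n :=
  hsum ▸ psum_mono d (blockIdx_spec (hsum ▸ hx)).1

lemma shiftCycle_partialImage (hsum : psum d r = n) {i x : ℕ} (hi : i < n) (hx : x < n) :
    shiftCycle i (n - psum d (blockIdx d r i + 1)) (partialImage n r d (i + 1) x) =
      partialImage n r d i x := by
  obtain ⟨-, hi₁, hi₂⟩ := blockIdx_spec (hsum ▸ hi)
  obtain ⟨-, hx₁, hx₂⟩ := blockIdx_spec (hsum ▸ hx)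
  have hin := psum_blockIdx_succ_le hsum hi
  have hxn := psum_blockIdx_succ_le hsum hx
  have := psum_trichotomy d (blockIdx d r i) (blockIdx d r x)
  simp only [shiftCycle, partialImage]
  split_ifs <;> omega

lemma psum_pred (hsum : psum d r = n) : psum d (r - 1) = n - d (r - 1) := by
  rcases Nat.eq_zero_or_pos r with rfl | hr
  · subst hsum; simp [psum]
  · rw [← hsum, ← Nat.sub_add_cancel hr, psum_succ, Nat.add_sub_cancel, Nat.add_sub_cancel]

lemma partialImage_zero (x : ℕ) :
    partialImage n r d 0 x =
      n - psum d (blockIdx d r x + 1) + (x - psum d (blockIdx d r x)) := by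
  simp [partialImage]

lemma partialImage_psum_pred (hsum : psum d r = n) {x : ℕ} (hx : x < n) :
    partialImage n r d (psum d (r - 1)) x = x := by
  obtain ⟨hxr, -, -⟩ := blockIdx_spec (hsum ▸ hx)
  unfold partialImage
  split_ifs with h
  · rfl
  · have hr : r - 1 + 1 = r := by omega
    rw [blockIdx_eq (by omega) (not_lt.mp h) (by rwa [hr, hsum]), hr, hsum, max_self]
    omega

lemma rowWord_reverse_prod_apply_val (hsum : psum d r = n) {aIdx : ℕ → ℕ} {t : ℕ}
    (ht : 1 ≤ t) (htn : t ≤ n) (hA : psum d (aIdx t) = psum d (blockIdx d r (t - 1) + 1))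
    (x : Fin n) :
    ((rowWord n d aIdx t).reverse.prod x : ℕ) =
      shiftCycle (t - 1) (n - psum d (blockIdx d r (t - 1) + 1)) x := by
  obtain ⟨-, -, hlt⟩ := blockIdx_spec (d := d) (hsum ▸ (by omega : t - 1 < n))
  have := psum_blockIdx_succ_le (d := d) hsum (by omega : t - 1 < n)
  rw [rowWord, hA]
  exact prod_reverse_map_adjSwap_apply_val _ _ (by omega) x

lemma IsBlockPerm.val_apply (hsum : psum d r = n) {σ : Equiv.Perm (Fin n)}
    (hσ : IsBlockPerm n r d σ) (x : Fin n) :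
    (σ x : ℕ) = n - psum d (blockIdx d r x + 1) + (x - psum d (blockIdx d r x)) := by
  have hx : (x : ℕ) < psum d r := hsum ▸ x.isLt
  obtain ⟨hb, hlo, hhi⟩ := blockIdx_spec hx
  have hk : (x : ℕ) - psum d (blockIdx d r x) < d (blockIdx d r x) := by
    rw [psum_succ] at hhi; omega
  simpa only [Nat.add_sub_cancel' hlo] using hσ _ _ hb hk (by omega)

end Rows

section Word

variable {n r : ℕ} {d : ℕ → ℕ} {aIdx : ℕ → ℕ}

lemma psum_aIdx_eq
    (haIdx : ∀ t, 1 ≤ t → t ≤ n - d (r - 1) →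
      1 ≤ aIdx t ∧ aIdx t ≤ r ∧ psum d (aIdx t - 1) < t ∧ t ≤ psum d (aIdx t))
    {t : ℕ} (ht : 1 ≤ t) (htN : t ≤ n - d (r - 1)) :
    psum d (aIdx t) = psum d (blockIdx d r (t - 1) + 1) := by
  obtain ⟨h₁, h₂, h₃, h₄⟩ := haIdx t ht htN
  have hsucc : aIdx t - 1 + 1 = aIdx t := Nat.sub_add_cancel h₁
  rw [blockIdx_eq (b := aIdx t - 1) (by omega) (by omega) (by rw [hsucc]; omega), hsucc]

lemma prod_reverse_flatten_rowWord_apply_val (hsum : psum d r = n)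
    (hA : ∀ t, 1 ≤ t → t ≤ n - d (r - 1) →
      psum d (aIdx t) = psum d (blockIdx d r (t - 1) + 1))
    {u : ℕ} (hu : u ≤ n - d (r - 1)) (x : Fin n) :
    ((((List.range u).map fun v => rowWord n d aIdx (n - d (r - 1) - v)).flatten.reverse.prod x
      : Fin n) : ℕ) = partialImage n r d (n - d (r - 1) - u) x := by
  induction u with
  | zero =>
    rw [Nat.sub_zero, ← psum_pred hsum, partialImage_psum_pred hsum x.isLt]
    rfl
  | succ u ih =>
    have ht : n - d (r - 1) - u = n - d (r - 1) - (u + 1) + 1 := by omega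
    rw [List.range_succ, List.map_append, List.flatten_append, List.reverse_append,
      List.prod_append, List.map_singleton, List.flatten_singleton, Equiv.Perm.mul_apply,
      rowWord_reverse_prod_apply_val hsum (by omega) (by omega) (hA _ (by omega) (by omega)),
      ih (by omega), ht, Nat.add_sub_cancel, shiftCycle_partialImage hsum (by omega) x.isLt]

lemma fullWord_reverse_prod (hsum : psum d r = n)
    (hA : ∀ t, 1 ≤ t → t ≤ n - d (r - 1) →
      psum d (aIdx t) = psum d (blockIdx d r (t - 1) + 1))
    {σ : Equiv.Perm (Fin n)} (hσ : IsBlockPerm n r d σ) :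
    (fullWord n r d aIdx).reverse.prod = σ := by
  ext x
  rw [fullWord, prod_reverse_flatten_rowWord_apply_val hsum hA le_rfl, Nat.sub_self,
    partialImage_zero, IsBlockPerm.val_apply hsum hσ]

end Word

section Length

variable {n r : ℕ} {d : ℕ → ℕ}

lemma length_fullWord (aIdx : ℕ → ℕ) :
    (fullWord n r d aIdx).length = ∑ t ∈ Icc 1 (n - d (r - 1)), (n - psum d (aIdx t)) := by
  calc (fullWord n r d aIdx).length
      = ∑ u ∈ range (n - d (r - 1)), (n - psum d (aIdx (n - d (r - 1) - u))) := by
        rw [sum_eq_multiset_sum, range_val, Multiset.range, Multiset.map_coe, Multiset.sum_coe,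
          fullWord, List.length_flatten, List.map_map]
        simp only [Function.comp_def, rowWord, List.length_map, List.length_range]
    _ = ∑ t ∈ Icc 1 (n - d (r - 1)), (n - psum d (aIdx t)) := by
        refine sum_nbij' (n - d (r - 1) - ·) (n - d (r - 1) - ·) ?_ ?_ ?_ ?_ ?_ <;>
          intro u hu <;> simp only [mem_Icc, mem_range] at hu ⊢ <;> omega

lemma sum_range_blockIdx (hsum : psum d r = n) :
    ∑ i ∈ range n, (n - psum d (blockIdx d r i + 1)) =
      ∑ a ∈ range r, d a * (n - psum d (a + 1)) := by
  simpa only [hsum, smul_eq_mul] using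
    sum_range_psum_blockIdx (d := d) (r := r) (fun a => n - psum d (a + 1)) le_rfl

lemma sum_Icc_psum_aIdx (hsum : psum d r = n) {aIdx : ℕ → ℕ}
    (hA : ∀ t, 1 ≤ t → t ≤ n - d (r - 1) →
      psum d (aIdx t) = psum d (blockIdx d r (t - 1) + 1)) :
    ∑ t ∈ Icc 1 (n - d (r - 1)), (n - psum d (aIdx t)) =
      ∑ a ∈ range r, d a * (n - psum d (a + 1)) := by
  rw [← sum_range_blockIdx hsum]
  have hN := psum_pred hsum
  calc ∑ t ∈ Icc 1 (n - d (r - 1)), (n - psum d (aIdx t))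
      = ∑ i ∈ range (n - d (r - 1)), (n - psum d (blockIdx d r i + 1)) := by
        refine sum_nbij' (· - 1) (· + 1) ?_ ?_ ?_ ?_ ?_ <;> intro t ht <;>
          simp only [mem_Icc, mem_range] at ht ⊢
        all_goals first | omega | rw [hA t ht.1 ht.2]
    _ = ∑ i ∈ range n, (n - psum d (blockIdx d r i + 1)) := by
        -- the added points form the last block, so their terms are `n - D_r = 0`
        refine sum_subset (range_subset_range.mpr (Nat.sub_le _ _)) fun i hi hiN => ?_
        rw [mem_range] at hi hiN
        have hr : r - 1 + 1 = r := by
          obtain ⟨hb, -, -⟩ := blockIdx_spec (d := d) (r := r) (x := i) (hsum ▸ hi)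
          omega
        rw [blockIdx_eq (b := r - 1) (by omega) (by omega) (by rwa [hr, hsum]), hr, hsum,
          Nat.sub_self]

lemma card_filter_le_val (c : ℕ) (h : c ≤ n) : #{y : Fin n | c ≤ (y : ℕ)} = n - c := by
  have := card_filter_add_card_filter_not (s := univ) (fun y : Fin n => (y : ℕ) < c)
  simp only [Fin.card_filter_val_lt, not_lt, card_univ, Fintype.card_fin] at this
  omega

lemma IsBlockPerm.inversion_iff (hsum : psum d r = n) {σ : Equiv.Perm (Fin n)}
    (hσ : IsBlockPerm n r d σ) (x y : Fin n) :
    (x < y ∧ σ y < σ x) ↔ psum d (blockIdx d r x + 1) ≤ y := by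
  have hx : (x : ℕ) < psum d r := hsum ▸ x.isLt
  have hy : (y : ℕ) < psum d r := hsum ▸ y.isLt
  obtain ⟨-, hx₁, hx₂⟩ := blockIdx_spec hx
  obtain ⟨-, hy₁, hy₂⟩ := blockIdx_spec hy
  have hxn := psum_blockIdx_succ_le hsum x.isLt
  have hyn := psum_blockIdx_succ_le hsum y.isLt
  have := psum_trichotomy d (blockIdx d r x) (blockIdx d r y)
  rw [Fin.lt_def, Fin.lt_def, IsBlockPerm.val_apply hsum hσ, IsBlockPerm.val_apply hsum hσ]
  omega

lemma IsBlockPerm.invCount_eq (hsum : psum d r = n) {σ : Equiv.Perm (Fin n)}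
    (hσ : IsBlockPerm n r d σ) :
    invCount σ = ∑ a ∈ range r, d a * (n - psum d (a + 1)) := by
  calc invCount σ = ∑ x : Fin n, #{y : Fin n | psum d (blockIdx d r x + 1) ≤ y} := by
        simp only [invCount, IsBlockPerm.inversion_iff hsum hσ, card_filter,
          Fintype.sum_prod_type]
    _ = ∑ i ∈ range n, (n - psum d (blockIdx d r i + 1)) := by
        rw [← Fin.sum_univ_eq_sum_range (fun i => n - psum d (blockIdx d r i + 1))]
        exact sum_congr rfl fun x _ => card_filter_le_val _ (psum_blockIdx_succ_le hsum x.isLt)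
    _ = _ := sum_range_blockIdx hsum

end Length

end BlockAntiDiagonal

open BlockAntiDiagonal

theorem stmt8_general (n : ℕ) (r : ℕ) (d : ℕ → ℕ)
    (hsum : psum d r = n)
    (σ : Equiv.Perm (Fin n)) (hσ : IsBlockPerm n r d σ)
    (aIdx : ℕ → ℕ)
    (haIdx : ∀ t, 1 ≤ t → t ≤ n - d (r - 1) →
      1 ≤ aIdx t ∧ aIdx t ≤ r ∧ psum d (aIdx t - 1) < t ∧ t ≤ psum d (aIdx t)) :
    (fullWord n r d aIdx).reverse.prod = σ ∧
    (fullWord n r d aIdx).length =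
      ∑ t ∈ Finset.Icc 1 (n - d (r - 1)), (n - psum d (aIdx t)) ∧
    (fullWord n r d aIdx).length = ∑ a ∈ Finset.range r, ∑ b ∈ Finset.Ioo a r, d a * d b ∧
    (fullWord n r d aIdx).length = invCount σ := by
  have hA := fun t ht htN => psum_aIdx_eq haIdx (t := t) ht htN
  have hlen :
      (fullWord n r d aIdx).length = ∑ a ∈ Finset.range r, d a * (n - psum d (a + 1)) := by
    rw [length_fullWord, sum_Icc_psum_aIdx hsum hA]
  refine ⟨fullWord_reverse_prod hsum hA hσ, length_fullWord aIdx, ?_, ?_⟩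
  · rw [hlen]
    refine Finset.sum_congr rfl fun a ha => ?_
    rw [← Finset.mul_sum, sum_Ioo_eq_psum_sub (Finset.mem_range.mp ha), hsum]
  · rw [hlen, IsBlockPerm.invCount_eq hsum hσ]

/-- With `a(t)` the unique index with `D_{a(t)-1} < t ≤ D_{a(t)}`, the word
`V_{n-d_r} ⋯ V_1` (letters applied from left to right, so the composite permutation is the
product of the reversed list) is a reduced expression for `w_{d_1,…,d_r}`: its product is
`w_{d_1,…,d_r}` and its number of letters `∑_t (n - D_{a(t)}) = ∑_{a<b} d_a d_b` equals the
number of inversions. -/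
theorem stmt8 (n : ℕ) (hn : 2 ≤ n) (r : ℕ) (hr : 0 < r) (d : ℕ → ℕ)
    (hd : ∀ a < r, 0 < d a) (hsum : psum d r = n)
    (σ : Equiv.Perm (Fin n)) (hσ : IsBlockPerm n r d σ)
    (aIdx : ℕ → ℕ)
    (haIdx : ∀ t, 1 ≤ t → t ≤ n - d (r - 1) →
      1 ≤ aIdx t ∧ aIdx t ≤ r ∧ psum d (aIdx t - 1) < t ∧ t ≤ psum d (aIdx t)) :
    (fullWord n r d aIdx).reverse.prod = σ ∧
    (fullWord n r d aIdx).length =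
      ∑ t ∈ Finset.Icc 1 (n - d (r - 1)), (n - psum d (aIdx t)) ∧
    (fullWord n r d aIdx).length = ∑ a ∈ Finset.range r, ∑ b ∈ Finset.Ioo a r, d a * d b ∧
    (fullWord n r d aIdx).length = invCount σ :=
  stmt8_general n r d hsum σ hσ aIdx haIdx
end

section
/- Fix n ≥ 2 and a permutation σ of {1,…,n}. Let U(ℝ) be the group of upper triangular unipotent real n×n matrices, let U_σ(ℝ) = {x ∈ U(ℝ) : x_{ij} = 0 for all i < j with σ(i) < σ(j)} and Ū_σ(ℝ) = {x ∈ U(ℝ) : x_{ij} = 0 for all i < j with σ(i) > σ(j)}. Then U_σ(ℝ) and Ū_σ(ℝ) are subgroups of U(ℝ), and every u ∈ U(ℝ) can be written uniquely as u = u₁ u₂ with u₁ ∈ U_σ(ℝ) and u₂ ∈ Ū_σ(ℝ), and also uniquely as u = v₂ v₁ with v₂ ∈ Ū_σ(ℝ) and v₁ ∈ U_σ(ℝ). -/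
open Matrix

/-- An upper triangular unipotent matrix: `1` on the diagonal and `0` below it. -/
def IsUnipUpper {n : ℕ} (u : Matrix (Fin n) (Fin n) ℝ) : Prop :=
  (∀ i, u i i = 1) ∧ ∀ i j : Fin n, j < i → u i j = 0

/-- Membership in `U_σ(ℝ)`: upper triangular unipotent with `x_{ij} = 0` for all `i < j`
with `σ(i) < σ(j)`. -/
def MemU {n : ℕ} (σ : Equiv.Perm (Fin n)) (x : Matrix (Fin n) (Fin n) ℝ) : Prop :=
  IsUnipUpper x ∧ ∀ i j : Fin n, i < j → σ i < σ j → x i j = 0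

/-- Membership in `Ū_σ(ℝ)`: upper triangular unipotent with `x_{ij} = 0` for all `i < j`
with `σ(i) > σ(j)`. -/
def MemUbar {n : ℕ} (σ : Equiv.Perm (Fin n)) (x : Matrix (Fin n) (Fin n) ℝ) : Prop :=
  IsUnipUpper x ∧ ∀ i j : Fin n, i < j → σ j < σ i → x i j = 0

/-!
Call a set of positions above the diagonal closed if `i < k < j` with `(i, k)` and `(k, j)` in it
forces `(i, j)` in it. The inversion positions of `σ` and its non-inversion positions are both
closed, and unitriangular matrices supported on a closed set are closed under products.

For any unitriangular `u` and any set `S` of positions, solving for the entries of each row from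
left to right yields `c` supported on `S` such that `c * u` vanishes on `S`. If `u` is supported on
a closed `S`, so is `c * u`, hence `c * u = 1` and `u⁻¹ = c`. For arbitrary `u` this gives
`u = c⁻¹ * (c * u)`, a factor supported on `S` times one supported on its complement. The
factorization is unique because the two groups meet only in `1`; exchanging the roles of the
inversion and non-inversion positions gives the factorization in the other order.
-/

/-- The complement of `P` among the positions above the diagonal is closed under
composition. -/
def IsUpperCotransitive {ι : Type*} [LT ι] (P : ι → ι → Prop) : Prop :=
  ∀ ⦃i k j⦄, i < k → k < j → P i j → P i k ∨ P k j

theorem isUpperCotransitive_lt_comp {ι α : Type*} [LT ι] [LinearOrder α] (f : ι → α) :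
    IsUpperCotransitive fun i j => f i < f j := by
  intro i k j _ _ hij
  rcases lt_or_ge (f i) (f k) with hik | hki
  · exact .inl hik
  · exact .inr (hki.trans_lt hij)

namespace Matrix

variable {ι K : Type*} [LinearOrder ι] [CommRing K]

def IsUpperUnitriangular (x : Matrix ι ι K) : Prop :=
  (∀ i, x i i = 1) ∧ x.IsUpperTriangular

def IsUnitriangularZeroOn (P : ι → ι → Prop) (x : Matrix ι ι K) : Prop :=
  x.IsUpperUnitriangular ∧ ∀ i j, i < j → P i j → x i j = 0

variable {P Q : ι → ι → Prop} {x y u : Matrix ι ι K}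

theorem IsUpperTriangular.apply_mul_apply_eq_zero (hx : x.IsUpperTriangular)
    (hy : y.IsUpperTriangular) {i j k : ι} (h : k < i ∨ j < k) : x i k * y k j = 0 := by
  rcases h with h | h
  · rw [hx h, zero_mul]
  · rw [hy h, mul_zero]

theorem IsUnitriangularZeroOn.one : (1 : Matrix ι ι K).IsUnitriangularZeroOn P :=
  ⟨⟨fun i => one_apply_eq i, blockTriangular_one⟩, fun _ _ hij _ => one_apply_ne hij.ne⟩

theorem IsUnitriangularZeroOn.mono (hPQ : ∀ i j, i < j → Q i j → P i j)
    (hx : x.IsUnitriangularZeroOn P) : x.IsUnitriangularZeroOn Q :=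
  ⟨hx.1, fun i j hij hQ => hx.2 i j hij (hPQ i j hij hQ)⟩

theorem IsUnitriangularZeroOn.eq_one (hPQ : ∀ i j, i < j → P i j ∨ Q i j)
    (hP : x.IsUnitriangularZeroOn P) (hQ : x.IsUnitriangularZeroOn Q) : x = 1 := by
  ext i j
  rcases lt_trichotomy i j with hij | rfl | hji
  · rw [one_apply_ne hij.ne]
    exact (hPQ i j hij).elim (hP.2 i j hij) (hQ.2 i j hij)
  · rw [hP.1.1 i, one_apply_eq]
  · rw [hP.1.2 hji, one_apply_ne hji.ne']

variable [Fintype ι]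

theorem IsUpperUnitriangular.mul (hx : x.IsUpperUnitriangular) (hy : y.IsUpperUnitriangular) :
    (x * y).IsUpperUnitriangular := by
  refine ⟨fun i => ?_, hx.2.mul hy.2⟩
  rw [mul_apply, Fintype.sum_eq_single i fun k hk =>
    hx.2.apply_mul_apply_eq_zero hy.2 hk.lt_or_gt, hx.1, hy.1, mul_one]

theorem IsUpperUnitriangular.isUnit_det (hx : x.IsUpperUnitriangular) : IsUnit x.det := by
  rw [det_of_isUpperTriangular hx.2, Finset.prod_eq_one fun i _ => hx.1 i]
  exact isUnit_one

theorem IsUpperUnitriangular.mul_apply_eq_sum_add (c : Matrix ι ι K)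
    (hu : u.IsUpperUnitriangular) (i j : ι) :
    (c * u) i j = ∑ k : {k // k < j}, c i k * u k j + c i j := by
  rw [mul_apply, ← Fintype.sum_subtype_add_sum_subtype (· < j)]
  congr 1
  rw [Fintype.sum_eq_single ⟨j, lt_irrefl j⟩, hu.1, mul_one]
  rintro ⟨k, hkj⟩ hk
  have hjk : j < k := lt_of_le_of_ne (not_lt.1 hkj) fun h => hk (Subtype.ext h.symm)
  rw [hu.2 hjk, mul_zero]

theorem IsUnitriangularZeroOn.mul (hP : IsUpperCotransitive P)
    (hx : x.IsUnitriangularZeroOn P) (hy : y.IsUnitriangularZeroOn P) :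
    (x * y).IsUnitriangularZeroOn P := by
  refine ⟨hx.1.mul hy.1, fun i j hij hPij => ?_⟩
  rw [mul_apply]
  refine Finset.sum_eq_zero fun k _ => ?_
  rcases lt_trichotomy k i with hki | rfl | hik
  · exact hx.1.2.apply_mul_apply_eq_zero hy.1.2 (.inl hki)
  · rw [hy.2 _ _ hij hPij, mul_zero]
  rcases lt_trichotomy k j with hkj | rfl | hjk
  · rcases hP hik hkj hPij with h | h
    · rw [hx.2 _ _ hik h, zero_mul]
    · rw [hy.2 _ _ hkj h, mul_zero]
  · rw [hx.2 _ _ hij hPij, zero_mul]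
  · exact hx.1.2.apply_mul_apply_eq_zero hy.1.2 (.inr hjk)

/-- Row `i` of a matrix `c` vanishing on `P` such that `c * u` vanishes off `P`: at an upper
position `(i, j)` outside `P` we have `(c * u) i j = ∑ k < j, c i k * u k j + c i j`, which
determines `c i j` from the entries of row `i` to its left. -/
noncomputable def eliminator (P : ι → ι → Prop) [DecidableRel P] (u : Matrix ι ι K)
    (i : ι) : ι → K
  | j => if j = i then 1 else
      if i < j ∧ ¬ P i j then -∑ k : {k // k < j}, eliminator P u i k * u k j else 0
termination_by j => wellFounded_lt.wrap j
decreasing_by exact k.2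

theorem isUnitriangularZeroOn_eliminator [DecidableRel P] (u : Matrix ι ι K) :
    (of (eliminator P u)).IsUnitriangularZeroOn P := by
  refine ⟨⟨fun i => ?_, fun i j (hji : j < i) => ?_⟩, fun i j hij hPij => ?_⟩
  · rw [of_apply, eliminator, if_pos rfl]
  · rw [of_apply, eliminator, if_neg hji.ne, if_neg fun h => h.1.not_gt hji]
  · rw [of_apply, eliminator, if_neg hij.ne', if_neg fun h => h.2 hPij]

theorem isUnitriangularZeroOn_eliminator_mul [DecidableRel P] (hu : u.IsUpperUnitriangular) :
    (of (eliminator P u) * u).IsUnitriangularZeroOn fun i j => ¬ P i j := by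
  refine ⟨(isUnitriangularZeroOn_eliminator u).1.mul hu, fun i j hij hPij => ?_⟩
  rw [hu.mul_apply_eq_sum_add, of_apply, eliminator, if_neg hij.ne', if_pos ⟨hij, hPij⟩]
  simp only [of_apply, add_neg_cancel]

theorem IsUnitriangularZeroOn.inv (hP : IsUpperCotransitive P)
    (hx : x.IsUnitriangularZeroOn P) : x⁻¹.IsUnitriangularZeroOn P := by
  classical
  have hc := isUnitriangularZeroOn_eliminator (P := P) x
  have hcx : of (eliminator P x) * x = 1 :=
    (hc.mul hP hx).eq_one (fun i j _ => em (P i j)) (isUnitriangularZeroOn_eliminator_mul hx.1)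
  rwa [inv_eq_left_inv hcx]

theorem IsUnitriangularZeroOn.eq_and_eq_of_mul_eq_mul (hP : IsUpperCotransitive P)
    (hQ : IsUpperCotransitive Q) (hPQ : ∀ i j, i < j → P i j ∨ Q i j)
    {a a' b b' : Matrix ι ι K}
    (ha : a.IsUnitriangularZeroOn P) (ha' : a'.IsUnitriangularZeroOn P)
    (hb : b.IsUnitriangularZeroOn Q) (hb' : b'.IsUnitriangularZeroOn Q)
    (h : a * b = a' * b') : a = a' ∧ b = b' := by
  have hswap : a'⁻¹ * a = b' * b⁻¹ :=
    calc a'⁻¹ * a = a'⁻¹ * (a * b * b⁻¹) := by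
          rw [mul_nonsing_inv_cancel_right b a hb.1.isUnit_det]
      _ = b' * b⁻¹ := by rw [h, mul_assoc, nonsing_inv_mul_cancel_left a' _ ha'.1.isUnit_det]
  have h_one : a'⁻¹ * a = 1 :=
    ((ha'.inv hP).mul hP ha).eq_one hPQ (hswap ▸ hb'.mul hQ (hb.inv hQ))
  have haa' : a = a' := by
    rw [← mul_nonsing_inv_cancel_left a' a ha'.1.isUnit_det, h_one, mul_one]
  subst haa'
  exact ⟨rfl, by rw [← nonsing_inv_mul_cancel_left a b ha.1.isUnit_det, h,
    nonsing_inv_mul_cancel_left a b' ha.1.isUnit_det]⟩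

theorem existsUnique_mul_eq (hP : IsUpperCotransitive P) (hQ : IsUpperCotransitive Q)
    (hPQ : ∀ i j, i < j → (Q i j ↔ ¬ P i j)) (hu : u.IsUpperUnitriangular) :
    ∃! p : Matrix ι ι K × Matrix ι ι K,
      p.1.IsUnitriangularZeroOn P ∧ p.2.IsUnitriangularZeroOn Q ∧ u = p.1 * p.2 := by
  classical
  set c := of (eliminator P u)
  have hc : c.IsUnitriangularZeroOn P := isUnitriangularZeroOn_eliminator u
  have hcu : (c * u).IsUnitriangularZeroOn Q :=
    (isUnitriangularZeroOn_eliminator_mul hu).mono fun i j hij => (hPQ i j hij).1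
  have hu_eq : u = c⁻¹ * (c * u) := (nonsing_inv_mul_cancel_left c u hc.1.isUnit_det).symm
  refine ⟨(c⁻¹, c * u), ⟨hc.inv hP, hcu, hu_eq⟩, ?_⟩
  rintro ⟨a, b⟩ ⟨ha, hb, hab⟩
  have hcover : ∀ i j, i < j → P i j ∨ Q i j := fun i j hij =>
    (em (P i j)).imp_right (hPQ i j hij).2
  exact Prod.ext_iff.2
    (ha.eq_and_eq_of_mul_eq_mul hP hQ hcover (hc.inv hP) hb hcu (hab.symm.trans hu_eq))

end Matrix

theorem stmt15_general (n : ℕ) (σ : Equiv.Perm (Fin n)) :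
    MemU σ (1 : Matrix (Fin n) (Fin n) ℝ) ∧
    (∀ x y, MemU σ x → MemU σ y → MemU σ (x * y)) ∧
    (∀ x, MemU σ x → MemU σ x⁻¹) ∧
    MemUbar σ (1 : Matrix (Fin n) (Fin n) ℝ) ∧
    (∀ x y, MemUbar σ x → MemUbar σ y → MemUbar σ (x * y)) ∧
    (∀ x, MemUbar σ x → MemUbar σ x⁻¹) ∧
    (∀ u : Matrix (Fin n) (Fin n) ℝ, IsUnipUpper u →
      (∃! p : Matrix (Fin n) (Fin n) ℝ × Matrix (Fin n) (Fin n) ℝ,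
        MemU σ p.1 ∧ MemUbar σ p.2 ∧ u = p.1 * p.2) ∧
      (∃! p : Matrix (Fin n) (Fin n) ℝ × Matrix (Fin n) (Fin n) ℝ,
        MemUbar σ p.1 ∧ MemU σ p.2 ∧ u = p.1 * p.2)) := by
  have hU : IsUpperCotransitive fun i j : Fin n => σ i < σ j := isUpperCotransitive_lt_comp σ
  have hUbar : IsUpperCotransitive fun i j : Fin n => σ j < σ i :=
    isUpperCotransitive_lt_comp (OrderDual.toDual ∘ σ)
  have hUbar_iff : ∀ i j : Fin n, i < j → (σ j < σ i ↔ ¬ σ i < σ j) := fun i j hij =>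
    (not_lt.trans (σ.injective.ne hij.ne').le_iff_lt).symm
  have hU_iff : ∀ i j : Fin n, i < j → (σ i < σ j ↔ ¬ σ j < σ i) := fun i j hij =>
    (not_lt.trans (σ.injective.ne hij.ne).le_iff_lt).symm
  -- `MemU σ` and `MemUbar σ` unfold to `IsUnitriangularZeroOn` for these two patterns.
  exact ⟨IsUnitriangularZeroOn.one, fun _ _ => IsUnitriangularZeroOn.mul hU,
    fun _ => IsUnitriangularZeroOn.inv hU,
    IsUnitriangularZeroOn.one, fun _ _ => IsUnitriangularZeroOn.mul hUbar,
    fun _ => IsUnitriangularZeroOn.inv hUbar,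
    fun _ hu => ⟨existsUnique_mul_eq hU hUbar hUbar_iff hu,
      existsUnique_mul_eq hUbar hU hU_iff hu⟩⟩

/-- `U_σ(ℝ)` and `Ū_σ(ℝ)` are subgroups of the group of upper triangular
unipotent matrices, and every upper triangular unipotent `u` factors uniquely as `u = u₁u₂`
with `u₁ ∈ U_σ(ℝ)`, `u₂ ∈ Ū_σ(ℝ)`, and also uniquely as `u = v₂v₁` with `v₂ ∈ Ū_σ(ℝ)`,
`v₁ ∈ U_σ(ℝ)`. -/
theorem stmt15 (n : ℕ) (hn : 2 ≤ n) (σ : Equiv.Perm (Fin n)) :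
    MemU σ (1 : Matrix (Fin n) (Fin n) ℝ) ∧
    (∀ x y, MemU σ x → MemU σ y → MemU σ (x * y)) ∧
    (∀ x, MemU σ x → MemU σ x⁻¹) ∧
    MemUbar σ (1 : Matrix (Fin n) (Fin n) ℝ) ∧
    (∀ x y, MemUbar σ x → MemUbar σ y → MemUbar σ (x * y)) ∧
    (∀ x, MemUbar σ x → MemUbar σ x⁻¹) ∧
    (∀ u : Matrix (Fin n) (Fin n) ℝ, IsUnipUpper u →
      (∃! p : Matrix (Fin n) (Fin n) ℝ × Matrix (Fin n) (Fin n) ℝ,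
        MemU σ p.1 ∧ MemUbar σ p.2 ∧ u = p.1 * p.2) ∧
      (∃! p : Matrix (Fin n) (Fin n) ℝ × Matrix (Fin n) (Fin n) ℝ,
        MemUbar σ p.1 ∧ MemU σ p.2 ∧ u = p.1 * p.2)) :=
  stmt15_general n σ
end
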